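/- arXiv:math/0606576 — 7 statements merged into one kernel-verified Lean document; each statement's English description precedes it below -/
import Mathlib

section
/- Let a group G act on a set X, let Z be a global cross section for this action with common isotropy subgroup G_0, and let H be a subgroup of G. Then the action of H on X (obtained by restricting the G-action) is free if and only if the action of H on the left coset space G/G_0 given by h·(gG_0) = (hg)G_0 is free. -/
/-- Let a group `G` act on a set `X`, let `Z` be a global cross section for
this action with common isotropy subgroup `G₀`, and let `H` be a subgroup of `G`. Then the
action of `H` on `X` is free iff the action of `H` on the coset space `G ⧸ G₀` is free. -/
theorem stmt_0 {G X : Type*} [Group G] [MulAction G X]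
    (G₀ : Subgroup G) (Z : Set X) (hZne : Z.Nonempty)
    (hcross : ∀ x : X, ∃! z, z ∈ Z ∧ z ∈ MulAction.orbit G x)
    (hglobal : ∀ z ∈ Z, MulAction.stabilizer G z = G₀)
    (H : Subgroup G) :
    (∀ x : X, MulAction.stabilizer H x = ⊥) ↔
      (∀ q : G ⧸ G₀, MulAction.stabilizer H q = ⊥) := by
  have key : ∀ z ∈ Z, ∀ g h : G,
      (h • (QuotientGroup.mk g : G ⧸ G₀) = QuotientGroup.mk g) ↔
        h ∈ MulAction.stabilizer G (g • z) := by
    intro z hz g h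
    rw [MulAction.stabilizer_smul_eq_stabilizer_map_conj, hglobal z hz]
    have h1 : h • (QuotientGroup.mk g : G ⧸ G₀) = QuotientGroup.mk (h * g) := rfl
    rw [h1, QuotientGroup.eq]
    constructor
    · intro hq
      refine ⟨g⁻¹ * h * g, ?_, by simp [MulAut.conj]; group⟩
      have := inv_mem hq
      simpa [mul_assoc] using this
    · rintro ⟨k, hk, hke⟩
      have : g⁻¹ * h * g = k := by
        simp [MulAut.conj] at hke
        rw [← hke]; group
      have hk' : g⁻¹ * h * g ∈ G₀ := this ▸ hk
      have := inv_mem hk'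
      simpa [mul_assoc] using this
  constructor
  · intro hfree q
    obtain ⟨z, hz⟩ := hZne
    induction q using QuotientGroup.induction_on with
    | H g =>
      rw [Subgroup.eq_bot_iff_forall]
      intro h hh
      have hh' : (h : G) • (QuotientGroup.mk g : G ⧸ G₀) = QuotientGroup.mk g := hh
      have : (h : G) ∈ MulAction.stabilizer G (g • z) := (key z hz g h).mp hh'
      have hmem : h ∈ MulAction.stabilizer H (g • z) := this
      rw [hfree (g • z)] at hmem
      exact hmem
  · intro hfree x
    rw [Subgroup.eq_bot_iff_forall]
    intro h hh
    obtain ⟨z, ⟨hz, g, hgz⟩, -⟩ := hcross x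
    have hx : x = g⁻¹ • z := by rw [← hgz]; simp
    have : (h : G) ∈ MulAction.stabilizer G (g⁻¹ • z) := by
      have : (h : G) • x = x := hh
      rwa [hx] at this
    have hq : (h : G) • (QuotientGroup.mk g⁻¹ : G ⧸ G₀) = QuotientGroup.mk g⁻¹ :=
      (key z hz g⁻¹ h).mpr this
    have hmem : h ∈ MulAction.stabilizer H (QuotientGroup.mk g⁻¹ : G ⧸ G₀) := hq
    rw [hfree _] at hmem
    exact hmem
end

section
/- Let G be a group with subgroups H and G_0, and let G' be a complete set of representatives of the double cosets HgG_0, g ∈ G, in G. Then a global cross section exists for the action of H on G/G_0 (by h·(gG_0) = (hg)G_0) if and only if the subgroups H ∩ g'G_0g'^{-1}, g' ∈ G', are all conjugate to one another in H. -/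
/-- The double coset `H g G₀ = {h * g * g₀ : h ∈ H, g₀ ∈ G₀}` in `G`. -/
def doubleCoset {G : Type*} [Group G] (H G₀ : Subgroup G) (g : G) : Set G :=
  {x | ∃ h ∈ H, ∃ k ∈ G₀, x = h * g * k}

/-
Since `h • gG₀ = (hg)G₀`, the `H`-orbit of `gG₀` consists of the cosets of the elements of `HgG₀`,
so the cosets `g'G₀`, `g' ∈ G'`, form a cross section, and the stabilizer of `gG₀` in `H` is
`H ∩ gG₀g⁻¹`. For any action, `stab (a • x) = a (stab x) a⁻¹`, so a global cross section forces
all stabilizers to be conjugate. Conversely, if `stab r₀ = aᵣ (stab r) aᵣ⁻¹` for every `r` in a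
cross section `R`, then replacing each `r` by `aᵣ • r` gives a cross section on which the
stabilizer is constantly `stab r₀`.
-/

open MulAction

section CrossSection

variable (α : Type*) {X : Type*} [Group α] [MulAction α X]

def IsCrossSection (V : Set X) : Prop :=
  ∀ x : X, ∃! v, v ∈ V ∧ v ∈ orbit α x

variable {α}

theorem smul_mem_orbit_iff {a : α} {x y : X} : a • x ∈ orbit α y ↔ x ∈ orbit α y := by
  rw [← orbit_eq_iff, ← orbit_eq_iff, orbit_smul]

theorem IsCrossSection.image_smul {R : Set X} (hR : IsCrossSection α R) (f : X → α) :
    IsCrossSection α ((fun x => f x • x) '' R) := by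
  intro x
  obtain ⟨r, ⟨hrR, hrx⟩, hr⟩ := hR x
  refine ⟨f r • r, ⟨Set.mem_image_of_mem _ hrR, smul_mem_orbit_iff.mpr hrx⟩, ?_⟩
  rintro _ ⟨⟨s, hsR, rfl⟩, hsx⟩
  rw [hr s ⟨hsR, smul_mem_orbit_iff.mp hsx⟩]

theorem IsCrossSection.exists_stabilizer_eq_map_conj {V : Set X} (hV : IsCrossSection α V)
    (hVstab : ∀ v ∈ V, ∀ w ∈ V, stabilizer α v = stabilizer α w) (x y : X) :
    ∃ a : α, stabilizer α y = (stabilizer α x).map (MulAut.conj a).toMonoidHom := by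
  obtain ⟨_, ⟨hvV, b, rfl⟩, -⟩ := hV x
  obtain ⟨_, ⟨hwV, c, rfl⟩, -⟩ := hV y
  refine ⟨c⁻¹ * b, ?_⟩
  calc stabilizer α y = stabilizer α (c⁻¹ • c • y) := by rw [inv_smul_smul]
    _ = (stabilizer α (c • y)).map (MulAut.conj c⁻¹).toMonoidHom :=
      stabilizer_smul_eq_stabilizer_map_conj _ _
    _ = stabilizer α ((c⁻¹ * b) • x) := by
      rw [hVstab _ hwV _ hvV, mul_smul, stabilizer_smul_eq_stabilizer_map_conj c⁻¹]
    _ = _ := stabilizer_smul_eq_stabilizer_map_conj _ _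

theorem IsCrossSection.exists_const_stabilizer_iff {R : Set X} (hR : IsCrossSection α R) :
    (∃ V : Set X, IsCrossSection α V ∧ ∀ v ∈ V, ∀ w ∈ V, stabilizer α v = stabilizer α w) ↔
      ∀ r₁ ∈ R, ∀ r₂ ∈ R, ∃ a : α,
        stabilizer α r₂ = (stabilizer α r₁).map (MulAut.conj a).toMonoidHom := by
  constructor
  · rintro ⟨V, hV, hVstab⟩ r₁ - r₂ -
    exact hV.exists_stabilizer_eq_map_conj hVstab r₁ r₂
  · intro hconj
    rcases R.eq_empty_or_nonempty with rfl | ⟨r₀, hr₀⟩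
    · exact ⟨∅, hR, by simp⟩
    choose! f hf using fun r hr => hconj r hr r₀ hr₀
    refine ⟨_, hR.image_smul f, ?_⟩
    rintro _ ⟨r, hr, rfl⟩ _ ⟨s, hs, rfl⟩
    rw [stabilizer_smul_eq_stabilizer_map_conj, stabilizer_smul_eq_stabilizer_map_conj,
      ← hf r hr, ← hf s hs]

end CrossSection

section Quotient

variable {G : Type*} [Group G] (H G₀ : Subgroup G)

theorem mk_mem_orbit_mk_iff (g g' : G) :
    (g : G ⧸ G₀) ∈ orbit H (g' : G ⧸ G₀) ↔ g ∈ doubleCoset H G₀ g' := by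
  change (∃ a : H, (a : G) • (g' : G ⧸ G₀) = g) ↔ _
  simp only [Subtype.exists, MulAction.Quotient.smul_mk, smul_eq_mul, QuotientGroup.eq,
    doubleCoset, Set.mem_ofPred_eq, exists_prop]
  refine exists_congr fun h => and_congr_right fun _ => ⟨fun hk => ⟨_, hk, by group⟩, ?_⟩
  rintro ⟨k, hk, rfl⟩
  simpa [mul_assoc] using hk

theorem stabilizer_mk (g : G) :
    stabilizer G (g : G ⧸ G₀) = G₀.map (MulAut.conj g).toMonoidHom := by
  have hg : (g : G ⧸ G₀) = g • ((1 : G) : G ⧸ G₀) := by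
    rw [MulAction.Quotient.smul_mk, smul_eq_mul, mul_one]
  rw [hg, stabilizer_smul_eq_stabilizer_map_conj, stabilizer_quotient]

theorem map_subtype_stabilizer_mk (g : G) :
    (stabilizer H (g : G ⧸ G₀)).map H.subtype = H ⊓ G₀.map (MulAut.conj g).toMonoidHom := by
  rw [show stabilizer H (g : G ⧸ G₀) = (stabilizer G (g : G ⧸ G₀)).subgroupOf H from rfl,
    Subgroup.subgroupOf_map_subtype, stabilizer_mk, inf_comm]

theorem Subgroup.map_subtype_map_conj (a : H) (S : Subgroup H) :
    (S.map (MulAut.conj a).toMonoidHom).map H.subtype =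
      (S.map H.subtype).map (MulAut.conj (a : G)).toMonoidHom := by
  simp only [Subgroup.map_map]
  congr 1

theorem stabilizer_mk_eq_map_conj_iff (a : H) (g₁ g₂ : G) :
    stabilizer H (g₂ : G ⧸ G₀) = (stabilizer H (g₁ : G ⧸ G₀)).map (MulAut.conj a).toMonoidHom ↔
      H ⊓ G₀.map (MulAut.conj g₂).toMonoidHom =
        (H ⊓ G₀.map (MulAut.conj g₁).toMonoidHom).map (MulAut.conj (a : G)).toMonoidHom := by
  rw [← (Subgroup.map_injective H.subtype_injective).eq_iff, Subgroup.map_subtype_map_conj,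
    map_subtype_stabilizer_mk, map_subtype_stabilizer_mk]

theorem isCrossSection_image_mk {G' : Set G}
    (hrep : ∀ g : G, ∃! g', g' ∈ G' ∧ g ∈ doubleCoset H G₀ g') :
    IsCrossSection H ((↑) '' G' : Set (G ⧸ G₀)) := by
  intro q
  obtain ⟨g, rfl⟩ := QuotientGroup.mk_surjective q
  obtain ⟨g', ⟨hg', hgg'⟩, huniq⟩ := hrep g
  refine ⟨g', ⟨⟨g', hg', rfl⟩, mem_orbit_symm.mp ((mk_mem_orbit_mk_iff H G₀ g g').mpr hgg')⟩, ?_⟩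
  rintro _ ⟨⟨g'', hg'', rfl⟩, hg''g⟩
  rw [huniq g'' ⟨hg'', (mk_mem_orbit_mk_iff H G₀ g g'').mp (mem_orbit_symm.mp hg''g)⟩]

end Quotient

/-- given a complete set `G'` of representatives of the double cosets
`HgG₀` in `G`, a global cross section exists for the action of `H` on `G ⧸ G₀` iff
the subgroups `H ∩ g'G₀g'⁻¹`, `g' ∈ G'`, are all conjugate to one another in `H`. -/
theorem stmt_2 {G : Type*} [Group G] (H G₀ : Subgroup G) (G' : Set G)
    (hrep : ∀ g : G, ∃! g', g' ∈ G' ∧ g ∈ doubleCoset H G₀ g') :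
    (∃ V : Set (G ⧸ G₀),
        (∀ q : G ⧸ G₀, ∃! v, v ∈ V ∧ v ∈ MulAction.orbit H q) ∧
        ∀ v ∈ V, ∀ w ∈ V, MulAction.stabilizer H v = MulAction.stabilizer H w) ↔
    (∀ g₁ ∈ G', ∀ g₂ ∈ G', ∃ h ∈ H,
        H ⊓ Subgroup.map (MulAut.conj g₂).toMonoidHom G₀ =
          Subgroup.map (MulAut.conj h).toMonoidHom
            (H ⊓ Subgroup.map (MulAut.conj g₁).toMonoidHom G₀)) := by
  refine (isCrossSection_image_mk H G₀ hrep).exists_const_stabilizer_iff.trans ?_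
  simp only [Set.forall_mem_image, stabilizer_mk_eq_map_conj_iff, Subtype.exists, exists_prop]
end

section
/- Let a group G act on a set X with a global cross section Z whose common isotropy subgroup is G_0, let H be a subgroup of G, and suppose there exists a complete set G' = {g_i : i ∈ I} of representatives of the double cosets HgG_0, g ∈ G, in G such that H ∩ g_iG_0g_i^{-1} is the same subgroup of H for all i ∈ I. Then the map (i, z) ↦ g_i z from I × Z to X is injective with image Z̃ := G'Z = {g_i z : i ∈ I, z ∈ Z}, and Z̃ is a global cross section for the action of H on X. -/
/-- let `Z` be a global cross section for `(G, X)` with common isotropy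
subgroup `G₀`, and let `G'` be a complete set of representatives of the double cosets
`HgG₀` in `G` with `H ∩ g'G₀g'⁻¹` the same for all `g' ∈ G'`. Then the map
`(g', z) ↦ g' • z` is injective on `G' × Z`, and its image `Z̃ = G'Z` is a global cross
section for the action of `H` on `X`. -/
theorem stmt_5 {G X : Type*} [Group G] [MulAction G X]
    (H G₀ : Subgroup G) (Z : Set X)
    (hcross : ∀ x : X, ∃! z, z ∈ Z ∧ z ∈ MulAction.orbit G x)
    (hglobal : ∀ z ∈ Z, MulAction.stabilizer G z = G₀)
    (G' : Set G)
    (hrep : ∀ g : G, ∃! g', g' ∈ G' ∧ g ∈ doubleCoset H G₀ g')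
    (hconst : ∀ g₁ ∈ G', ∀ g₂ ∈ G',
        H ⊓ Subgroup.map (MulAut.conj g₁).toMonoidHom G₀ =
          H ⊓ Subgroup.map (MulAut.conj g₂).toMonoidHom G₀) :
    (∀ g₁ ∈ G', ∀ z₁ ∈ Z, ∀ g₂ ∈ G', ∀ z₂ ∈ Z,
        g₁ • z₁ = g₂ • z₂ → g₁ = g₂ ∧ z₁ = z₂) ∧
    (∀ x : X, ∃! w, w ∈ {w : X | ∃ g' ∈ G', ∃ z ∈ Z, w = g' • z} ∧
        w ∈ MulAction.orbit H x) ∧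
    (∀ w₁ ∈ {w : X | ∃ g' ∈ G', ∃ z ∈ Z, w = g' • z},
     ∀ w₂ ∈ {w : X | ∃ g' ∈ G', ∃ z ∈ Z, w = g' • z},
        MulAction.stabilizer H w₁ = MulAction.stabilizer H w₂) := by
  -- stabilizer of any z ∈ Z is G₀, as membership statement
  have hstab : ∀ z ∈ Z, ∀ s : G, s • z = z ↔ s ∈ G₀ := by
    intro z hz s
    rw [← hglobal z hz]
    exact Iff.rfl
  -- key: if g₁ ∈ G', z ∈ Z, h ∈ H, g₂ ∈ G' and g₁ • z = (h * g₂) • z then g₁ = g₂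
  have key : ∀ g₁ ∈ G', ∀ g₂ ∈ G', ∀ z ∈ Z, ∀ h ∈ H,
      g₁ • z = (h * g₂) • z → g₁ = g₂ := by
    intro g₁ hg₁ g₂ hg₂ z hz h hh heq
    have hk : ((h * g₂)⁻¹ * g₁) • z = z := by
      rw [mul_smul, heq, inv_smul_smul]
    rw [hstab z hz] at hk
    have hmem : g₁ ∈ doubleCoset H G₀ g₂ :=
      ⟨h, hh, (h * g₂)⁻¹ * g₁, hk, by group⟩
    have hself : g₁ ∈ doubleCoset H G₀ g₁ := ⟨1, one_mem _, 1, one_mem _, by group⟩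
    exact ((hrep g₁).unique ⟨hg₁, hself⟩ ⟨hg₂, hmem⟩)
  -- helper for stabilizers
  have hstab2 : ∀ g' : G, ∀ z ∈ Z, ∀ s : G,
      s • (g' • z) = g' • z ↔ s ∈ Subgroup.map (MulAut.conj g').toMonoidHom G₀ := by
    intro g' z hz s
    constructor
    · intro hs
      refine ⟨g'⁻¹ * s * g', (hstab z hz _).mp ?_, ?_⟩
      · rw [mul_smul, mul_smul, hs, inv_smul_smul]
      · simp only [MulEquiv.coe_toMonoidHom, MulAut.conj_apply]; group
    · rintro ⟨y, hy, rfl⟩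
      have hyz : y • z = z := (hstab z hz y).mpr hy
      simp only [MulEquiv.coe_toMonoidHom, MulAut.conj_apply, mul_smul,
        inv_smul_smul, hyz]
  refine ⟨?_, ?_, ?_⟩
  · -- injectivity
    intro g₁ hg₁ z₁ hz₁ g₂ hg₂ z₂ hz₂ heq
    have hz12 : z₁ = z₂ := by
      refine (hcross z₂).unique ⟨hz₁, ⟨g₁⁻¹ * g₂, ?_⟩⟩ ⟨hz₂, MulAction.mem_orbit_self z₂⟩
      show (g₁⁻¹ * g₂) • z₂ = z₁
      rw [mul_smul, ← heq, inv_smul_smul]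
    subst hz12
    have := key g₁ hg₁ g₂ hg₂ z₁ hz₁ 1 (one_mem _) (by rwa [one_mul])
    exact ⟨this, rfl⟩
  · -- cross section
    intro x
    obtain ⟨z, ⟨hzZ, a, ha⟩, -⟩ := hcross x
    obtain ⟨g', ⟨hg', h, hh, k, hk, hdk⟩, -⟩ := hrep a⁻¹
    refine ⟨g' • z, ⟨⟨g', hg', z, hzZ, rfl⟩, ⟨⟨h⁻¹, inv_mem hh⟩, ?_⟩⟩, ?_⟩
    · show (h : G)⁻¹ • x = g' • z
      have hx : x = a⁻¹ • z := by rw [← ha, inv_smul_smul]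
      have hkz : k • z = z := (hstab z hzZ k).mpr hk
      rw [hx, hdk, mul_smul, mul_smul, hkz, inv_smul_smul]
    · rintro w ⟨⟨g₂, hg₂, z₂, hz₂, rfl⟩, ⟨h₂, hh₂⟩⟩
      -- w = g₂ • z₂ = h₂ • x ; also g' • z = h⁻¹ • x
      have hgz : g' • z = (h : G)⁻¹ • x := by
        have hx : x = a⁻¹ • z := by rw [← ha, inv_smul_smul]
        have hkz : k • z = z := (hstab z hzZ k).mpr hk
        rw [hx, hdk, mul_smul, mul_smul, hkz, inv_smul_smul]
      have hw2 : g₂ • z₂ = (h₂ : G) • x := hh₂.symm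
      -- z₂ = z by uniqueness of cross section
      have hz2z : z₂ = z := by
        refine (hcross z).unique ⟨hz₂, ⟨g₂⁻¹ * (h₂ : G) * h * g', ?_⟩⟩
          ⟨hzZ, MulAction.mem_orbit_self z⟩
        show (g₂⁻¹ * (h₂ : G) * h * g') • z = z₂
        rw [mul_smul, mul_smul, mul_smul, hgz, smul_inv_smul, ← hw2, inv_smul_smul]
      subst hz2z
      -- g₂ • z₂ = (h₂ * h) • (g' • z₂)
      have : g₂ • z₂ = ((h₂ : G) * h * g') • z₂ := by
        rw [hw2, mul_smul, mul_smul, hgz, smul_inv_smul]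
      have hg2g : g₂ = g' := key g₂ hg₂ g' hg' z₂ hzZ ((h₂ : G) * h)
        (mul_mem h₂.2 hh) this
      rw [hg2g]
  · -- stabilizers equal
    rintro w₁ ⟨g₁, hg₁, z₁, hz₁, rfl⟩ w₂ ⟨g₂, hg₂, z₂, hz₂, rfl⟩
    ext s
    simp only [MulAction.mem_stabilizer_iff]
    have e1 : (s : ↥H) • (g₁ • z₁) = (s : G) • (g₁ • z₁) := rfl
    have e2 : (s : ↥H) • (g₂ • z₂) = (s : G) • (g₂ • z₂) := rfl
    rw [e1, e2, hstab2 g₁ z₁ hz₁, hstab2 g₂ z₂ hz₂]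
    have := hconst g₁ hg₁ g₂ hg₂
    constructor
    · intro hm
      have : (s : G) ∈ H ⊓ Subgroup.map (MulAut.conj g₂).toMonoidHom G₀ := by
        rw [← this]; exact ⟨s.2, hm⟩
      exact this.2
    · intro hm
      have : (s : G) ∈ H ⊓ Subgroup.map (MulAut.conj g₁).toMonoidHom G₀ := by
        rw [this]; exact ⟨s.2, hm⟩
      exact this.2
end

section
/- Let G be a group with subgroups H, K, and G_0 such that every g ∈ G can be written uniquely in the form g = hk with h ∈ H and k ∈ K, and G_0 is a subgroup of K. Let G' be a subset of K. Then G' is a complete set of representatives of the left cosets kG_0, k ∈ K, in K if and only if G' is a complete set of representatives of the double cosets HgG_0, g ∈ G, in G. -/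
/-- let `H`, `K`, `G₀` be subgroups of `G` with unique factorization
`g = h * k` (`h ∈ H`, `k ∈ K`) and `G₀ ≤ K`, and let `G' ⊆ K`. Then `G'` is a complete
set of representatives of the left cosets `kG₀` in `K` iff `G'` is a complete set of
representatives of the double cosets `HgG₀` in `G`. -/
theorem stmt_9 {G : Type*} [Group G] (H K G₀ : Subgroup G) (hG₀K : G₀ ≤ K)
    (huniq : ∀ g : G, ∃! p : H × K, (p.1 : G) * (p.2 : G) = g)
    (G' : Set G) (hG'K : G' ⊆ (K : Set G)) :
    (∀ k ∈ K, ∃! g', g' ∈ G' ∧ ∃ g₀ ∈ G₀, k = g' * g₀) ↔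
    (∀ g : G, ∃! g', g' ∈ G' ∧ g ∈ doubleCoset H G₀ g') := by
  -- Triviality of H ∩ K
  have htriv : ∀ x : G, x ∈ H → x ∈ K → x = 1 := by
    intro x hxH hxK
    obtain ⟨p, _, hp⟩ := huniq x
    have h1 := hp (⟨x, hxH⟩, 1) (by simp)
    have h2 := hp (1, ⟨x, hxK⟩) (by simp)
    have := h1.trans h2.symm
    have h3 : ((⟨x, hxH⟩ : H) : G) = ((1 : H) : G) := by
      exact congrArg (fun q : H × K => (q.1 : G)) this
    simpa using h3
  constructor
  · intro hL g
    obtain ⟨⟨h, k⟩, hfac, hpuniq⟩ := huniq g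
    obtain ⟨g', ⟨hg'G', g₀, hg₀, hkeq⟩, hg'uniq⟩ := hL k k.2
    refine ⟨g', ⟨hg'G', h, h.2, g₀, hg₀, ?_⟩, ?_⟩
    · rw [← hfac, hkeq, mul_assoc]
    · rintro g'' ⟨hg''G', h'', hh'', g₀'', hg₀'', heq⟩
      have hkK : g'' * g₀'' ∈ K := K.mul_mem (hG'K hg''G') (hG₀K hg₀'')
      have := hpuniq (⟨h'', hh''⟩, ⟨g'' * g₀'', hkK⟩) (by show h'' * (g'' * g₀'') = g; rw [← mul_assoc, ← heq])
      have hk : g'' * g₀'' = (k : G) := by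
        have := congrArg (fun q : H × K => (q.2 : G)) this
        simpa using this
      exact hg'uniq g'' ⟨hg''G', g₀'', hg₀'', hk.symm⟩
  · intro hR k hkK
    obtain ⟨g', ⟨hg'G', h, hhH, g₀, hg₀, hkeq⟩, hg'uniq⟩ := hR k
    have hhK : h ∈ K := by
      have : h = k * g₀⁻¹ * g'⁻¹ := by
        rw [hkeq]; group
      rw [this]
      exact K.mul_mem (K.mul_mem hkK (K.inv_mem (hG₀K hg₀))) (K.inv_mem (hG'K hg'G'))
    have h1 : h = 1 := htriv h hhH hhK
    refine ⟨g', ⟨hg'G', g₀, hg₀, by rw [hkeq, h1, one_mul]⟩, ?_⟩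
    rintro g'' ⟨hg''G', g₀'', hg₀'', heq⟩
    exact hg'uniq g'' ⟨hg''G', 1, H.one_mem, g₀'', hg₀'', by rw [heq, one_mul]⟩
end

section
/- Let a group G act on a set X with a global cross section Z whose common isotropy subgroup is G_0, and suppose there are subgroups H and K of G such that every g ∈ G can be written uniquely as g = hk with h ∈ H, k ∈ K, and G_0 ≤ K. Then the action of H on X (by restriction) is free, and Z̃ = KZ = {kz : k ∈ K, z ∈ Z} is a cross section for the action of H on X. -/
/-!
Every `g ∈ G` factors as `g = h * k`, so every point `g • z` lies in the `H`-orbit of the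
point `k • z` of `KZ`. Conversely, if two points `k • z` and `k' • z'` of `KZ` are related by
`g`, then `z = z'` because `Z` is a cross section, so `k'⁻¹ * g * k` fixes `z` and lies in
`G₀ ≤ K`; hence `g ∈ K`. An element of `H` relating two points of `KZ` thus lies in
`H ⊓ K = ⊥`, which gives both the uniqueness of the representative in `KZ` and freeness.
-/

namespace MulAction

variable {G X : Type*} [Group G] [MulAction G X]

def IsCrossSection (M : Type*) [Monoid M] [MulAction M X] (Z : Set X) : Prop :=
  ∀ x : X, ∃! z, z ∈ Z ∧ z ∈ orbit M x

def subgroupSMulSet (K : Subgroup G) (Z : Set X) : Set X :=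
  {w : X | ∃ k ∈ K, ∃ z ∈ Z, w = k • z}

variable {G₀ H K : Subgroup G} {Z : Set X}

theorem IsCrossSection.eq_of_smul_eq (hZ : IsCrossSection G Z) {z z' : X} (hz : z ∈ Z)
    (hz' : z' ∈ Z) {g : G} (h : g • z = z') : z = z' := by
  obtain ⟨y, -, hy⟩ := hZ z
  have hzz' : z' ∈ orbit G z := ⟨g, h⟩
  exact (hy z ⟨hz, mem_orbit_self z⟩).trans (hy z' ⟨hz', hzz'⟩).symm

theorem IsCrossSection.mem_of_smul_mem_subgroupSMulSet (hZ : IsCrossSection G Z)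
    (hglobal : ∀ z ∈ Z, stabilizer G z = G₀) (hG₀K : G₀ ≤ K) {w : X} {g : G}
    (hw : w ∈ subgroupSMulSet K Z) (hgw : g • w ∈ subgroupSMulSet K Z) : g ∈ K := by
  obtain ⟨k, hk, z, hz, rfl⟩ := hw
  obtain ⟨k', hk', z', hz', hgw⟩ := hgw
  have hzz' : z = z' := hZ.eq_of_smul_eq hz hz' (g := k'⁻¹ * g * k) <| by
    rw [mul_smul, mul_smul, hgw, inv_smul_smul]
  subst hzz'
  have hfix : k'⁻¹ * g * k ∈ G₀ := by
    rw [← hglobal z hz, mem_stabilizer_iff, mul_smul, mul_smul, hgw, inv_smul_smul]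
  have hK : k'⁻¹ * g * k ∈ K := hG₀K hfix
  simpa [mul_assoc] using K.mul_mem (K.mul_mem hk' hK) (K.inv_mem hk)

theorem IsCrossSection.exists_smul_mem_subgroupSMulSet (hZ : IsCrossSection G Z)
    (hHK : H.IsComplement' K) (x : X) : ∃ h ∈ H, h • x ∈ subgroupSMulSet K Z := by
  obtain ⟨z, ⟨hz, g, hgx⟩, -⟩ := hZ x
  obtain ⟨⟨h, k⟩, hhk⟩ := (hHK.existsUnique g⁻¹).exists
  refine ⟨(h : G)⁻¹, H.inv_mem h.2, k, k.2, z, hz, ?_⟩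
  rw [eq_inv_mul_of_mul_eq hhk, ← hgx, mul_smul, inv_smul_smul]

end MulAction

/-- let `G` act on `X` with a global cross section `Z` whose common
isotropy subgroup is `G₀`, and let `H`, `K` be subgroups of `G` such that every `g ∈ G`
is uniquely `g = h * k` (`h ∈ H`, `k ∈ K`) and `G₀ ≤ K`. Then the action of `H` on `X`
is free, and `Z̃ = KZ = {k • z : k ∈ K, z ∈ Z}` is a cross section for this action. -/
theorem stmt_10 {G X : Type*} [Group G] [MulAction G X]
    (G₀ : Subgroup G) (Z : Set X)
    (hcross : ∀ x : X, ∃! z, z ∈ Z ∧ z ∈ MulAction.orbit G x)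
    (hglobal : ∀ z ∈ Z, MulAction.stabilizer G z = G₀)
    (H K : Subgroup G) (hG₀K : G₀ ≤ K)
    (huniq : ∀ g : G, ∃! p : H × K, (p.1 : G) * (p.2 : G) = g) :
    (∀ x : X, MulAction.stabilizer H x = ⊥) ∧
    (∀ x : X, ∃! w, w ∈ {w : X | ∃ k ∈ K, ∃ z ∈ Z, w = k • z} ∧
        w ∈ MulAction.orbit H x) := by
  have hZ : MulAction.IsCrossSection G Z := hcross
  have hHK : H.IsComplement' K := Subgroup.isComplement_iff_existsUnique.mpr huniq
  have hH1 : ∀ {w : X} {h : G}, h ∈ H → w ∈ MulAction.subgroupSMulSet K Z →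
      h • w ∈ MulAction.subgroupSMulSet K Z → h = 1 :=
    fun hH hw hhw => Subgroup.disjoint_def.mp hHK.disjoint hH
      (hZ.mem_of_smul_mem_subgroupSMulSet hglobal hG₀K hw hhw)
  refine ⟨fun x => ?_,
    (fun x => ?_ : MulAction.IsCrossSection H (MulAction.subgroupSMulSet K Z))⟩ <;>
    obtain ⟨h, hH, hhx⟩ := hZ.exists_smul_mem_subgroupSMulSet hHK x
  · refine (Subgroup.eq_bot_iff_forall _).mpr fun ⟨g, hg⟩ hgx => Subtype.ext ?_
    replace hgx : g • x = x := hgx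
    have hconj : h * g * h⁻¹ = 1 := hH1 (H.mul_mem (H.mul_mem hH hg) (H.inv_mem hH)) hhx <| by
      rwa [mul_smul, mul_smul, inv_smul_smul, hgx]
    simpa using hconj
  · refine ⟨h • x, ⟨hhx, ⟨h, hH⟩, rfl⟩, ?_⟩
    rintro _ ⟨hw, h', rfl⟩
    have hrel : (h' : G) * h⁻¹ = 1 := hH1 (H.mul_mem h'.2 (H.inv_mem hH)) hhx <| by
      rwa [mul_smul, inv_smul_smul]
    change (h' : G) • x = h • x
    rw [mul_inv_eq_one.mp hrel]
end

section
/- Let p ≥ 1 and let Λ = diag(λ_1, ..., λ_p) be the p × p diagonal matrix with 1 > λ_1 > λ_2 > ... > λ_p > 0. Then the set of invertible real p × p matrices B satisfying B Λ Bᵀ = Λ and B (I_p − Λ) Bᵀ = I_p − Λ is exactly the set of diagonal matrices diag(ε_1, ..., ε_p) with ε_i ∈ {+1, −1} for all i; in other words, the isotropy subgroup of GL(p, ℝ) at (Λ, I_p − Λ) under the action B·(W_1, W_2) = (BW_1Bᵀ, BW_2Bᵀ) is the group of diagonal sign matrices. -/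
/-- let `Λ = diag(λ₁, ..., λ_p)` with `1 > λ₁ > ⋯ > λ_p > 0`. An
invertible real `p × p` matrix `B` satisfies `B Λ Bᵀ = Λ` and `B (I - Λ) Bᵀ = I - Λ`
iff `B` is a diagonal matrix `diag(ε₁, ..., ε_p)` with each `εᵢ ∈ {1, -1}`; i.e. the
isotropy subgroup of `GL(p, ℝ)` at `(Λ, I - Λ)` under `B • (W₁, W₂) = (BW₁Bᵀ, BW₂Bᵀ)`
is the group of diagonal sign matrices. -/
theorem stmt_14 (p : ℕ) (lam : Fin p → ℝ)
    (hpos : ∀ i, 0 < lam i) (hlt1 : ∀ i, lam i < 1)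
    (hdec : ∀ i j : Fin p, i < j → lam j < lam i)
    (B : Matrix (Fin p) (Fin p) ℝ) (hB : IsUnit B) :
    (B * Matrix.diagonal lam * B.transpose = Matrix.diagonal lam ∧
      B * (1 - Matrix.diagonal lam) * B.transpose = 1 - Matrix.diagonal lam) ↔
    (∃ ε : Fin p → ℝ, (∀ i, ε i = 1 ∨ ε i = -1) ∧ B = Matrix.diagonal ε) := by
  constructor
  · rintro ⟨h1, h2⟩
    -- Adding the two equations: B Bᵀ = 1
    have horth : B * B.transpose = 1 := by
      have h3 : B * B.transpose - B * Matrix.diagonal lam * B.transpose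
          = 1 - Matrix.diagonal lam := by
        rw [← h2]; simp [mul_sub, sub_mul]
      rw [h1] at h3
      exact sub_left_inj.mp h3
    have horth' : B.transpose * B = 1 := by
      rwa [mul_eq_one_comm] at horth
    -- B commutes with Λ
    have hcomm : B * Matrix.diagonal lam = Matrix.diagonal lam * B := by
      calc B * Matrix.diagonal lam
          = B * Matrix.diagonal lam * (B.transpose * B) := by rw [horth', mul_one]
        _ = (B * Matrix.diagonal lam * B.transpose) * B := by rw [← mul_assoc]
        _ = Matrix.diagonal lam * B := by rw [h1]
    -- off-diagonal entries vanish
    have hoff : ∀ i j : Fin p, i ≠ j → B i j = 0 := by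
      intro i j hij
      have := congrFun (congrFun hcomm i) j
      rw [Matrix.mul_diagonal, Matrix.diagonal_mul] at this
      have hne : lam j ≠ lam i := by
        rcases lt_or_gt_of_ne hij with h | h
        · exact ne_of_lt (hdec i j h)
        · exact ne_of_gt (hdec j i h)
      have : B i j * (lam j - lam i) = 0 := by linarith [this]
      rcases mul_eq_zero.mp this with h | h
      · exact h
      · exact absurd (sub_eq_zero.mp h) hne
    refine ⟨fun i => B i i, ?_, ?_⟩
    · intro i
      have := congrFun (congrFun horth i) i
      rw [Matrix.mul_apply] at this
      have hsum : ∀ j ∈ Finset.univ, j ≠ i → B i j * B.transpose j i = 0 := by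
        intro j _ hj
        rw [hoff i j (Ne.symm hj), zero_mul]
      rw [Finset.sum_eq_single i hsum (by simp)] at this
      have : B i i * B i i = 1 := by
        simpa [Matrix.transpose_apply, Matrix.one_apply] using this
      exact mul_self_eq_one_iff.mp this
    · ext i j
      by_cases h : i = j
      · subst h; simp [Matrix.diagonal_apply_eq]
      · rw [Matrix.diagonal_apply_ne _ h]; exact hoff i j h
  · rintro ⟨ε, hε, rfl⟩
    have hsq : ∀ i, ε i * ε i = 1 := by
      intro i; rcases hε i with h | h <;> rw [h] <;> ring
    constructor
    · rw [Matrix.diagonal_transpose, Matrix.diagonal_mul_diagonal,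
        Matrix.diagonal_mul_diagonal]
      have hfun : (fun i => ε i * lam i * ε i) = lam := by
        funext i; rcases hε i with h | h <;> rw [h] <;> ring
      rw [hfun]
    · have h1 : (1 : Matrix (Fin p) (Fin p) ℝ) - Matrix.diagonal lam
          = Matrix.diagonal (fun i => 1 - lam i) := by
        rw [← Matrix.diagonal_one, ← Matrix.diagonal_sub]
      rw [h1, Matrix.diagonal_transpose, Matrix.diagonal_mul_diagonal,
        Matrix.diagonal_mul_diagonal]
      have hfun : (fun i => ε i * (1 - lam i) * ε i) = (fun i => 1 - lam i) := by
        funext i; rcases hε i with h | h <;> rw [h] <;> ring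
      rw [hfun]
end

section
/- Let a group G act on a set X. Then a global cross section exists for this action if and only if the isotropy subgroups G_x, x ∈ X, are all conjugate to one another in G. -/
lemma conj_comp {G : Type*} [Group G] (a b : G) :
    (MulAut.conj a).toMonoidHom.comp (MulAut.conj b).toMonoidHom =
      (MulAut.conj (a * b)).toMonoidHom := by
  ext g; simp [mul_assoc]

/-- for an action of a group `G` on a set `X`, a global cross section
(a subset meeting each orbit exactly once, all of whose points have the same isotropy
subgroup) exists iff the isotropy subgroups `G_x`, `x ∈ X`, are all conjugate to one
another in `G`. -/
theorem stmt_18 {G X : Type*} [Group G] [MulAction G X] :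
    (∃ Z : Set X,
        (∀ x : X, ∃! z, z ∈ Z ∧ z ∈ MulAction.orbit G x) ∧
        ∀ z₁ ∈ Z, ∀ z₂ ∈ Z,
          MulAction.stabilizer G z₁ = MulAction.stabilizer G z₂) ↔
    (∀ x y : X, ∃ g : G,
        MulAction.stabilizer G y =
          Subgroup.map (MulAut.conj g).toMonoidHom (MulAction.stabilizer G x)) := by
  constructor
  · rintro ⟨Z, hZ, hstab⟩ x y
    obtain ⟨zx, ⟨hzxZ, g, hg⟩, -⟩ := hZ x
    obtain ⟨zy, ⟨hzyZ, h, hh⟩, -⟩ := hZ y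
    have hg' : g • x = zx := hg
    have hh' : h • y = zy := hh
    refine ⟨h⁻¹ * g, ?_⟩
    calc MulAction.stabilizer G y
        = MulAction.stabilizer G (h⁻¹ • zy) := by rw [← hh', inv_smul_smul]
      _ = Subgroup.map (MulAut.conj h⁻¹).toMonoidHom (MulAction.stabilizer G zy) :=
          MulAction.stabilizer_smul_eq_stabilizer_map_conj _ _
      _ = Subgroup.map (MulAut.conj h⁻¹).toMonoidHom (MulAction.stabilizer G zx) := by
          rw [hstab zx hzxZ zy hzyZ]
      _ = Subgroup.map (MulAut.conj h⁻¹).toMonoidHom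
            (Subgroup.map (MulAut.conj g).toMonoidHom (MulAction.stabilizer G x)) := by
          rw [← hg', MulAction.stabilizer_smul_eq_stabilizer_map_conj]
      _ = Subgroup.map (MulAut.conj (h⁻¹ * g)).toMonoidHom (MulAction.stabilizer G x) := by
          rw [Subgroup.map_map, conj_comp]
  · intro hconj
    classical
    -- choose a representative in each orbit with prescribed stabilizer
    by_cases hX : IsEmpty X
    · exact ⟨∅, fun x => (hX.false x).elim, fun z hz => (hX.false z).elim⟩
    rw [not_isEmpty_iff] at hX
    obtain ⟨x₀⟩ := hX
    have key : ∀ q : Quotient (MulAction.orbitRel G X),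
        ∃ z : X, z ∈ MulAction.orbit G q.out ∧
          MulAction.stabilizer G z = MulAction.stabilizer G x₀ := by
      intro q
      obtain ⟨g, hg⟩ := hconj q.out x₀
      exact ⟨g • q.out, MulAction.mem_orbit _ g,
        by rw [MulAction.stabilizer_smul_eq_stabilizer_map_conj, ← hg]⟩
    choose f hf hfs using key
    refine ⟨Set.range f, ?_, ?_⟩
    · intro x
      refine ⟨f ⟦x⟧, ⟨⟨⟦x⟧, rfl⟩, ?_⟩, ?_⟩
      · have h1 : (⟦x⟧ : Quotient (MulAction.orbitRel G X)).out ∈ MulAction.orbit G x :=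
          Quotient.mk_out (s := MulAction.orbitRel G X) x
        obtain ⟨g, hg⟩ := hf ⟦x⟧
        obtain ⟨h, hh⟩ := h1
        have hg' : g • (⟦x⟧ : Quotient (MulAction.orbitRel G X)).out = f ⟦x⟧ := hg
        have hh' : h • x = (⟦x⟧ : Quotient (MulAction.orbitRel G X)).out := hh
        exact ⟨g * h, by show (g * h) • x = f ⟦x⟧; rw [mul_smul, hh', hg']⟩
      · rintro z ⟨⟨q, rfl⟩, hz⟩
        have hq : (⟦x⟧ : Quotient (MulAction.orbitRel G X)) = q := by
          have h1 : f q ∈ MulAction.orbit G q.out := hf q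
          have h2 : (⟦f q⟧ : Quotient (MulAction.orbitRel G X)) = ⟦q.out⟧ :=
            Quotient.sound h1
          have h3 : (⟦f q⟧ : Quotient (MulAction.orbitRel G X)) = ⟦x⟧ :=
            Quotient.sound hz
          rw [← h3, h2, Quotient.out_eq]
        rw [hq]
    · rintro z₁ ⟨q₁, rfl⟩ z₂ ⟨q₂, rfl⟩
      rw [hfs q₁, hfs q₂]
end
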